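/- Let X, Y₁, Y₂, Y₃ be random variables with values in finite sets such that Y₁, Y₂, Y₃ are mutually independent. Then the conditional mutual information satisfies I(Y₁ ; Y₂ | X, Y₃) ≤ I( (Y₁, Y₂, Y₃) ; X ). -/

import Mathlib

/-- The probability that the finitely-valued random variable `X` (on the finite
probability space with mass function `P`) takes the value `a`. -/
noncomputable def rvDist {Ω α : Type*} [Fintype Ω] [DecidableEq α]
    (P : Ω → ℝ) (X : Ω → α) (a : α) : ℝ :=
  ∑ ω : Ω, if X ω = a then P ω else 0

/-- Shannon entropy of a finitely-valued random variable (in nats, with the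
convention `0 log 0 = 0`, which holds since `Real.log 0 = 0`). -/
noncomputable def rvEntropy {Ω α : Type*} [Fintype Ω] [Fintype α] [DecidableEq α]
    (P : Ω → ℝ) (X : Ω → α) : ℝ :=
  -∑ a : α, rvDist P X a * Real.log (rvDist P X a)

/-- Conditional Shannon entropy `H(X | Y) = H(X, Y) - H(Y)`. -/
noncomputable def rvCondEntropy {Ω α β : Type*} [Fintype Ω] [Fintype α] [Fintype β]
    [DecidableEq α] [DecidableEq β] (P : Ω → ℝ) (X : Ω → α) (Y : Ω → β) : ℝ :=
  rvEntropy P (fun ω => (X ω, Y ω)) - rvEntropy P Y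

/-- Mutual information `I(X ; Y) = H(X) + H(Y) - H(X, Y)`. -/
noncomputable def rvMutualInfo {Ω α β : Type*} [Fintype Ω] [Fintype α] [Fintype β]
    [DecidableEq α] [DecidableEq β] (P : Ω → ℝ) (X : Ω → α) (Y : Ω → β) : ℝ :=
  rvEntropy P X + rvEntropy P Y - rvEntropy P (fun ω => (X ω, Y ω))

/-- Conditional mutual information `I(X ; Y | Z) = H(X|Z) + H(Y|Z) - H(X,Y|Z)`. -/
noncomputable def rvCondMutualInfo {Ω α β γ : Type*} [Fintype Ω] [Fintype α]
    [Fintype β] [Fintype γ] [DecidableEq α] [DecidableEq β] [DecidableEq γ]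
    (P : Ω → ℝ) (X : Ω → α) (Y : Ω → β) (Z : Ω → γ) : ℝ :=
  rvCondEntropy P X Z + rvCondEntropy P Y Z
    - rvCondEntropy P (fun ω => (X ω, Y ω)) Z

/-! Writing `Z = (X, Y₃)`, the conditional mutual information equals
`H(Y₁, Z) + H(Y₂, Z) - H(Z) - H(Y₁, Y₂, Z)`. Three applications of subadditivity of entropy bound
this by `H(Y₁) + H(Y₂) + H(Y₃) + H(X) - H(Y₁, Y₂, Y₃, X)`, and independence turns
`H(Y₁) + H(Y₂) + H(Y₃)` into `H(Y₁, Y₂, Y₃)`, which leaves exactly `I((Y₁, Y₂, Y₃) ; X)`.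
Subadditivity is Gibbs' inequality for the product of the marginals, proved from `log x ≤ x - 1`. -/

section FiniteEntropy

variable {Ω α β : Type*} [Fintype Ω] {P : Ω → ℝ}

lemma rvDist_nonneg [DecidableEq α] (hP : ∀ ω, 0 ≤ P ω) (X : Ω → α) (a : α) :
    0 ≤ rvDist P X a :=
  Finset.sum_nonneg fun ω _ => ite_nonneg (hP ω) le_rfl

lemma le_rvDist_apply [DecidableEq α] (hP : ∀ ω, 0 ≤ P ω) (X : Ω → α) (ω : Ω) :
    P ω ≤ rvDist P X (X ω) := by
  simpa [rvDist] using Finset.single_le_sum (f := fun ω' => if X ω' = X ω then P ω' else 0)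
    (fun ω' _ => ite_nonneg (hP ω') le_rfl) (Finset.mem_univ ω)

lemma rvDist_apply_ne_zero [DecidableEq α] (hP : ∀ ω, 0 ≤ P ω) (X : Ω → α) {ω : Ω}
    (hω : P ω ≠ 0) : rvDist P X (X ω) ≠ 0 :=
  ((lt_of_le_of_ne (hP ω) hω.symm).trans_le (le_rvDist_apply hP X ω)).ne'

lemma sum_mul_comp_eq_sum_rvDist_mul [Fintype α] [DecidableEq α] (X : Ω → α) (h : α → ℝ) :
    ∑ ω, P ω * h (X ω) = ∑ a, rvDist P X a * h a := by
  simp only [rvDist, Finset.sum_mul, ite_mul, zero_mul]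
  rw [Finset.sum_comm]
  simp

lemma sum_rvDist [Fintype α] [DecidableEq α] (hP1 : ∑ ω, P ω = 1) (X : Ω → α) :
    ∑ a, rvDist P X a = 1 := by
  simpa [hP1] using (sum_mul_comp_eq_sum_rvDist_mul (P := P) X fun _ => 1).symm

lemma rvEntropy_eq_neg_sum [Fintype α] [DecidableEq α] (X : Ω → α) :
    rvEntropy P X = -∑ ω, P ω * Real.log (rvDist P X (X ω)) := by
  rw [rvEntropy, sum_mul_comp_eq_sum_rvDist_mul X fun a => Real.log (rvDist P X a)]

lemma rvEntropy_comp_of_injective [Fintype α] [Fintype β] [DecidableEq α] [DecidableEq β]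
    (X : Ω → α) {g : α → β} (hg : g.Injective) :
    rvEntropy P (fun ω => g (X ω)) = rvEntropy P X := by
  simp only [rvEntropy_eq_neg_sum, rvDist, hg.eq_iff]

lemma sum_mul_log_mul {f g : Ω → ℝ} (hf : ∀ ω, P ω ≠ 0 → f ω ≠ 0)
    (hg : ∀ ω, P ω ≠ 0 → g ω ≠ 0) :
    ∑ ω, P ω * Real.log (f ω * g ω) = ∑ ω, P ω * Real.log (f ω) + ∑ ω, P ω * Real.log (g ω) := by
  rw [← Finset.sum_add_distrib]
  refine Finset.sum_congr rfl fun ω _ => ?_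
  rcases eq_or_ne (P ω) 0 with h0 | h0
  · simp [h0]
  · rw [Real.log_mul (hf ω h0) (hg ω h0), mul_add]

/-- Gibbs' inequality. -/
lemma rvEntropy_le_neg_sum_mul_log [Fintype α] [DecidableEq α] (hP : ∀ ω, 0 ≤ P ω)
    (hP1 : ∑ ω, P ω = 1) (X : Ω → α) {q : α → ℝ} (hq : ∀ a, 0 ≤ q a) (hq1 : ∑ a, q a ≤ 1)
    (hqX : ∀ ω, P ω ≠ 0 → q (X ω) ≠ 0) :
    rvEntropy P X ≤ -∑ ω, P ω * Real.log (q (X ω)) := by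
  set p := rvDist P X
  have hpoint : ∀ ω, P ω * Real.log (q (X ω)) - P ω * Real.log (p (X ω))
      ≤ P ω * (q (X ω) / p (X ω)) - P ω := by
    intro ω
    rcases eq_or_ne (P ω) 0 with h0 | h0
    · simp [h0]
    have hp := rvDist_apply_ne_zero hP X h0
    have hratio : 0 < q (X ω) / p (X ω) :=
      div_pos ((hq _).lt_of_ne (hqX ω h0).symm) ((rvDist_nonneg hP X _).lt_of_ne hp.symm)
    calc P ω * Real.log (q (X ω)) - P ω * Real.log (p (X ω))
        = P ω * Real.log (q (X ω) / p (X ω)) := by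
          rw [Real.log_div (hqX ω h0) hp, mul_sub]
      _ ≤ P ω * (q (X ω) / p (X ω) - 1) :=
          mul_le_mul_of_nonneg_left (Real.log_le_sub_one_of_pos hratio) (hP ω)
      _ = P ω * (q (X ω) / p (X ω)) - P ω := by ring
  have hmass : ∑ ω, P ω * (q (X ω) / p (X ω)) ≤ 1 := by
    rw [sum_mul_comp_eq_sum_rvDist_mul X fun a => q a / p a]
    refine le_trans (Finset.sum_le_sum fun a _ => ?_) hq1
    rcases eq_or_ne (p a) 0 with h | h
    · simp [h, hq a]
    · rw [mul_div_cancel₀ _ h]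
  have := Finset.sum_le_sum fun ω (_ : ω ∈ Finset.univ) => hpoint ω
  rw [Finset.sum_sub_distrib, Finset.sum_sub_distrib, hP1] at this
  rw [rvEntropy_eq_neg_sum]
  linarith

lemma rvEntropy_pair_le [Fintype α] [Fintype β] [DecidableEq α] [DecidableEq β]
    (hP : ∀ ω, 0 ≤ P ω) (hP1 : ∑ ω, P ω = 1) (X : Ω → α) (Y : Ω → β) :
    rvEntropy P (fun ω => (X ω, Y ω)) ≤ rvEntropy P X + rvEntropy P Y := by
  have hprod_sum : ∑ c : α × β, rvDist P X c.1 * rvDist P Y c.2 = 1 := by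
    rw [Fintype.sum_prod_type, ← Finset.sum_mul_sum, sum_rvDist hP1, sum_rvDist hP1, one_mul]
  have hprod_ne : ∀ ω, P ω ≠ 0 → rvDist P X (X ω) * rvDist P Y (Y ω) ≠ 0 := fun ω h =>
    mul_ne_zero (rvDist_apply_ne_zero hP X h) (rvDist_apply_ne_zero hP Y h)
  have := rvEntropy_le_neg_sum_mul_log hP hP1 (fun ω => (X ω, Y ω))
    (fun c => mul_nonneg (rvDist_nonneg hP X c.1) (rvDist_nonneg hP Y c.2)) hprod_sum.le hprod_ne
  rwa [sum_mul_log_mul (fun ω h => rvDist_apply_ne_zero hP X h)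
    (fun ω h => rvDist_apply_ne_zero hP Y h), neg_add, ← rvEntropy_eq_neg_sum,
    ← rvEntropy_eq_neg_sum] at this

lemma rvEntropy_triple_eq_of_indep {γ : Type*} [Fintype α] [Fintype β] [Fintype γ]
    [DecidableEq α] [DecidableEq β] [DecidableEq γ] (hP : ∀ ω, 0 ≤ P ω)
    (X : Ω → α) (Y : Ω → β) (Z : Ω → γ)
    (hInd : ∀ a b c, rvDist P (fun ω => (X ω, Y ω, Z ω)) (a, b, c)
      = rvDist P X a * rvDist P Y b * rvDist P Z c) :
    rvEntropy P (fun ω => (X ω, Y ω, Z ω)) = rvEntropy P X + rvEntropy P Y + rvEntropy P Z := by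
  have hX := fun ω (h : P ω ≠ 0) => rvDist_apply_ne_zero hP X h
  have hY := fun ω (h : P ω ≠ 0) => rvDist_apply_ne_zero hP Y h
  have hZ := fun ω (h : P ω ≠ 0) => rvDist_apply_ne_zero hP Z h
  simp only [rvEntropy_eq_neg_sum, hInd]
  rw [sum_mul_log_mul (fun ω h => mul_ne_zero (hX ω h) (hY ω h)) hZ, sum_mul_log_mul hX hY]
  ring

end FiniteEntropy

/-- If `Y₁, Y₂, Y₃` are mutually independent finitely-valued random
variables, then `I(Y₁ ; Y₂ | X, Y₃) ≤ I((Y₁, Y₂, Y₃) ; X)`. -/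
theorem stmt14 {Ω σX σ1 σ2 σ3 : Type*} [Fintype Ω] [Fintype σX] [Fintype σ1]
    [Fintype σ2] [Fintype σ3] [DecidableEq σX] [DecidableEq σ1] [DecidableEq σ2]
    [DecidableEq σ3]
    (P : Ω → ℝ) (hP : ∀ ω, 0 ≤ P ω) (hP1 : ∑ ω : Ω, P ω = 1)
    (X : Ω → σX) (Y1 : Ω → σ1) (Y2 : Ω → σ2) (Y3 : Ω → σ3)
    (hInd : ∀ (y1 : σ1) (y2 : σ2) (y3 : σ3),
      rvDist P (fun ω => (Y1 ω, Y2 ω, Y3 ω)) (y1, y2, y3)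
        = rvDist P Y1 y1 * rvDist P Y2 y2 * rvDist P Y3 y3) :
    rvCondMutualInfo P Y1 Y2 (fun ω => (X ω, Y3 ω))
      ≤ rvMutualInfo P (fun ω => (Y1 ω, Y2 ω, Y3 ω)) X := by
  have hY1Z := rvEntropy_pair_le hP hP1 Y1 fun ω => (X ω, Y3 ω)
  have hY2Z := rvEntropy_pair_le hP hP1 Y2 fun ω => (X ω, Y3 ω)
  have hZ := rvEntropy_pair_le hP hP1 X Y3
  have hY := rvEntropy_triple_eq_of_indep hP Y1 Y2 Y3 hInd
  have hreassoc : rvEntropy P (fun ω => ((Y1 ω, Y2 ω), (X ω, Y3 ω)))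
      = rvEntropy P (fun ω => ((Y1 ω, Y2 ω, Y3 ω), X ω)) :=
    rvEntropy_comp_of_injective (fun ω => ((Y1 ω, Y2 ω, Y3 ω), X ω))
      (g := fun p : (σ1 × σ2 × σ3) × σX => ((p.1.1, p.1.2.1), (p.2, p.1.2.2))) <| by
        rintro ⟨⟨a1, a2, a3⟩, a⟩ ⟨⟨b1, b2, b3⟩, b⟩ h
        simp only [Prod.mk.injEq] at h ⊢
        tauto
  simp only [rvCondMutualInfo, rvCondEntropy, rvMutualInfo]
  linarith
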